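/- Let p be an odd prime, n ≥ 1, and R a commutative ring in which p·1 = 0. In the ring D = R[ε, X]/(ε², X^{p^n}), let Q(R) be the set of pairs (f₁, f₂) with f₁ = ε + Σ_{i=0}^{n−1} a_i X^{p^i} and f₂ = X + Σ_{i=1}^{n−1} b_i X^{p^i} (a_i, b_i ∈ R). For (f₁,f₂), (g₁,g₂) ∈ Q(R) with g₁ = ε + Σ_{i=0}^{n−1} c_i X^{p^i} and g₂ = X + Σ_{i=1}^{n−1} d_i X^{p^i}, define their product to be (f₁ + Σ_{i=0}^{n−1} c_i f₂^{p^i}, f₂ + Σ_{i=1}^{n−1} d_i f₂^{p^i}). Then this product is well defined (the result again lies in Q(R)) and makes Q(R) a group with identity element (ε, X). -/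

import Mathlib

/-!
Let `T` be the class of `X` in `D` and `pPolys k` the `R`-span of the `T ^ p ^ i` with
`k ≤ i < n`. As `p = 0` in `D`, `v ↦ v ^ p ^ i` is additive, so it maps `pPolys k` into
`pPolys (k + i)`; in particular `v ^ p ^ n = 0` for `v ∈ pPolys 0`, and `ε ↦ ε, X ↦ v` defines an
`R`-algebra endomorphism `subst v` of `D`, which preserves every `pPolys k`.
Since `f₁ + ∑ cᵢ f₂ ^ p ^ i = f₁ - ε + g₁(ε, f₂)` and `f₂ + ∑ dᵢ f₂ ^ p ^ i = g₂(ε, f₂)`, the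
product is `(f₁ - ε + subst f₂ g₁, subst f₂ g₂)`: closure follows, and associativity from
`subst (subst v w) = subst v ∘ subst w`. For inverses, if `v = T + b • T ^ p ^ k + (higher terms)`
then `subst (T - b • T ^ p ^ k) v` only has higher terms, because
`(T - b • T ^ p ^ k) ^ p ^ k - T ^ p ^ k ∈ pPolys (2k)`; descending induction on `k` gives a
left inverse.
-/

open MvPolynomial

theorem add_pow_prime_pow_of_natCast_eq_zero {A : Type*} [CommRing A] {p : ℕ} (hp : p.Prime)
    (hpA : (p : A) = 0) (k : ℕ) (x y : A) : (x + y) ^ p ^ k = x ^ p ^ k + y ^ p ^ k := by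
  obtain ⟨r, hr⟩ := exists_add_pow_prime_pow_eq hp x y k
  simpa [hpA] using hr

theorem sub_pow_prime_pow_of_natCast_eq_zero {A : Type*} [CommRing A] {p : ℕ} (hp : p.Prime)
    (hpA : (p : A) = 0) (k : ℕ) (x y : A) : (x - y) ^ p ^ k = x ^ p ^ k - y ^ p ^ k := by
  rw [eq_sub_iff_add_eq, ← add_pow_prime_pow_of_natCast_eq_zero hp hpA, sub_add_cancel]

namespace TruncDual

noncomputable section

variable (p n : ℕ) (R : Type*) [CommRing R]

abbrev D : Type _ :=
  MvPolynomial (Fin 2) R ⧸ Ideal.span {(X 0 : MvPolynomial (Fin 2) R) ^ 2, X 1 ^ p ^ n}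

def eps : D p n R := Ideal.Quotient.mk _ (X 0)

def T : D p n R := Ideal.Quotient.mk _ (X 1)

def pPolys (k : ℕ) : Submodule R (D p n R) :=
  Submodule.span R ((fun i => T p n R ^ p ^ i) '' Set.Ico k n)

variable {p n R}

theorem eps_sq : eps p n R ^ 2 = 0 := by
  rw [eps, ← map_pow, Ideal.Quotient.eq_zero_iff_mem]
  exact Ideal.subset_span (by simp)

theorem T_pow_eq_zero (hp : 0 < p) {i : ℕ} (hi : n ≤ i) : T p n R ^ p ^ i = 0 := by
  refine pow_eq_zero_of_le (Nat.pow_le_pow_right hp hi) ?_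
  rw [T, ← map_pow, Ideal.Quotient.eq_zero_iff_mem]
  exact Ideal.subset_span (by simp)

theorem natCast_eq_zero (hpR : (p : R) = 0) : (p : D p n R) = 0 := by
  rw [← map_natCast (algebraMap R (D p n R)), hpR, map_zero]

theorem T_pow_mem_pPolys (hp : 0 < p) {k i : ℕ} (hki : k ≤ i) :
    T p n R ^ p ^ i ∈ pPolys p n R k := by
  rcases lt_or_ge i n with hin | hni
  · exact Submodule.subset_span ⟨i, ⟨hki, hin⟩, rfl⟩
  · rw [T_pow_eq_zero hp hni]
    exact zero_mem _

theorem pPolys_antitone : Antitone (pPolys p n R) := fun _ _ hkl =>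
  Submodule.span_mono (Set.image_mono (Set.Ico_subset_Ico_left hkl))

theorem pPolys_eq_bot {k : ℕ} (hk : n ≤ k) : pPolys p n R k = ⊥ := by
  rw [pPolys, Set.Ico_eq_empty (not_lt.2 hk), Set.image_empty, Submodule.span_empty]

theorem mem_pPolys_iff {k : ℕ} {v : D p n R} :
    v ∈ pPolys p n R k ↔ ∃ e : ℕ → R, ∑ i ∈ Finset.Ico k n, e i • T p n R ^ p ^ i = v := by
  rw [pPolys, ← Finset.coe_Ico]
  exact Submodule.mem_span_image_finset_iff_exists_fun' R

theorem exists_eq_smul_add_of_mem_pPolys {k : ℕ} (hk : k < n) {v : D p n R}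
    (hv : v ∈ pPolys p n R k) :
    ∃ b : R, ∃ r ∈ pPolys p n R (k + 1), v = b • T p n R ^ p ^ k + r := by
  have : Set.Ico k n = insert k (Set.Ico (k + 1) n) := by
    ext i; simp only [Set.mem_Ico, Set.mem_insert_iff]; omega
  rwa [pPolys, this, Set.image_insert_eq, Submodule.mem_span_insert] at hv

theorem pow_mem_pPolys (hp : p.Prime) (hpR : (p : R) = 0) {k : ℕ} {v : D p n R}
    (hv : v ∈ pPolys p n R k) (i : ℕ) : v ^ p ^ i ∈ pPolys p n R (k + i) := by
  induction hv using Submodule.span_induction with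
  | mem _ h =>
    obtain ⟨j, hj, rfl⟩ := h
    rw [← pow_mul, ← pow_add]
    exact T_pow_mem_pPolys hp.pos (by have := hj.1; omega)
  | zero => rw [zero_pow (pow_ne_zero _ hp.ne_zero)]; exact zero_mem _
  | add x y _ _ hx hy =>
    rw [add_pow_prime_pow_of_natCast_eq_zero hp (natCast_eq_zero hpR)]
    exact add_mem hx hy
  | smul r x _ hx => rw [smul_pow]; exact Submodule.smul_mem _ _ hx

theorem pow_eq_zero_of_mem_pPolys (hp : p.Prime) (hpR : (p : R) = 0) {v : D p n R}
    (hv : v ∈ pPolys p n R 0) : v ^ p ^ n = 0 := by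
  simpa [pPolys_eq_bot le_rfl] using pow_mem_pPolys hp hpR hv n

def subst (v : D p n R) (hv : v ^ p ^ n = 0) : D p n R →ₐ[R] D p n R :=
  Ideal.Quotient.liftₐ _ (aeval ![eps p n R, v]) fun f hf => by
    refine (Ideal.span_le (I := RingHom.ker (aeval ![eps p n R, v]))).2 ?_ hf
    simp [Set.insert_subset_iff, eps_sq, hv]

section subst

variable {v : D p n R} (hv : v ^ p ^ n = 0)

@[simp]
theorem subst_mk (f : MvPolynomial (Fin 2) R) :
    subst v hv (Ideal.Quotient.mk _ f) = aeval ![eps p n R, v] f := rfl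

@[simp]
theorem subst_eps : subst v hv (eps p n R) = eps p n R := by simp [eps]

@[simp]
theorem subst_T : subst v hv (T p n R) = v := by simp [T]

theorem algHom_ext {f g : D p n R →ₐ[R] D p n R} (h0 : f (eps p n R) = g (eps p n R))
    (h1 : f (T p n R) = g (T p n R)) : f = g := by
  refine Ideal.Quotient.algHom_ext _ (MvPolynomial.algHom_ext fun i => ?_)
  fin_cases i
  exacts [h0, h1]

theorem subst_T_self (h : T p n R ^ p ^ n = 0) : subst (T p n R) h = AlgHom.id R _ :=
  algHom_ext (by simp) (by simp)

theorem subst_subst {w : D p n R} (hw : w ^ p ^ n = 0) (h : subst v hv w ^ p ^ n = 0) :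
    subst (subst v hv w) h = (subst v hv).comp (subst w hw) :=
  algHom_ext (by simp) (by simp)

theorem subst_mem_pPolys (hp : p.Prime) (hpR : (p : R) = 0) (hv₀ : v ∈ pPolys p n R 0) {k : ℕ}
    {u : D p n R} (hu : u ∈ pPolys p n R k) : subst v hv u ∈ pPolys p n R k := by
  refine (Submodule.span_le (p := (pPolys p n R k).comap (subst v hv).toLinearMap)).2 ?_ hu
  rintro _ ⟨i, hi, rfl⟩
  simp only [SetLike.mem_coe, Submodule.mem_comap, AlgHom.toLinearMap_apply, map_pow, subst_T]
  exact pPolys_antitone (by simpa using hi.1) (pow_mem_pPolys hp hpR hv₀ i)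

end subst

theorem mem_pPolys_zero_of_sub_T_mem (hp : 0 < p) {v : D p n R}
    (hv : v - T p n R ∈ pPolys p n R 1) : v ∈ pPolys p n R 0 := by
  have hT : T p n R ∈ pPolys p n R 0 := by
    simpa using T_pow_mem_pPolys (n := n) (R := R) hp (le_refl 0)
  simpa using add_mem (pPolys_antitone zero_le_one hv) hT

theorem pow_eq_zero_of_sub_T_mem (hp : p.Prime) (hpR : (p : R) = 0) {v : D p n R}
    (hv : v - T p n R ∈ pPolys p n R 1) : v ^ p ^ n = 0 :=
  pow_eq_zero_of_mem_pPolys hp hpR (mem_pPolys_zero_of_sub_T_mem hp.pos hv)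

theorem subst_sub_T_mem (hp : p.Prime) (hpR : (p : R) = 0) {v u : D p n R}
    (hv : v - T p n R ∈ pPolys p n R 1) (hu : u - T p n R ∈ pPolys p n R 1) :
    subst v (pow_eq_zero_of_sub_T_mem hp hpR hv) u - T p n R ∈ pPolys p n R 1 := by
  convert add_mem (subst_mem_pPolys (pow_eq_zero_of_sub_T_mem hp hpR hv) hp hpR
    (mem_pPolys_zero_of_sub_T_mem hp.pos hv) hu) hv using 1
  rw [map_sub, subst_T]
  abel

theorem exists_subst_eq_T (hp : p.Prime) (hpR : (p : R) = 0) {k : ℕ} (hk : 1 ≤ k)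
    {v : D p n R} (hv : v - T p n R ∈ pPolys p n R k) :
    ∃ w, ∃ hw : w - T p n R ∈ pPolys p n R 1,
      subst w (pow_eq_zero_of_sub_T_mem hp hpR hw) v = T p n R := by
  obtain hnk | hkn := le_or_gt n k
  · refine ⟨T p n R, by simp, ?_⟩
    have hvT : v - T p n R = 0 := by simpa [pPolys_eq_bot hnk] using hv
    rw [sub_eq_zero.1 hvT, subst_T]
  obtain ⟨b, r, hr, hvbr⟩ := exists_eq_smul_add_of_mem_pPolys hkn hv
  obtain ⟨u, hu_def⟩ : ∃ u, u = T p n R - b • T p n R ^ p ^ k := ⟨_, rfl⟩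
  have hu : u - T p n R ∈ pPolys p n R 1 := by
    rw [hu_def, sub_sub_cancel_left]
    exact neg_mem (Submodule.smul_mem _ _ (T_pow_mem_pPolys hp.pos hk))
  have hu' := pow_eq_zero_of_sub_T_mem hp hpR hu
  have hv' : subst u hu' v - T p n R ∈ pPolys p n R (k + 1) := by
    have e : subst u hu' v - T p n R = b • (u - T p n R) ^ p ^ k + subst u hu' r := by
      rw [sub_pow_prime_pow_of_natCast_eq_zero hp (natCast_eq_zero hpR),
        ← sub_add_cancel v (T p n R), hvbr]
      simp only [map_add, map_smul, map_pow, subst_T]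
      linear_combination (norm := module) hu_def
    rw [e]
    exact add_mem
      (Submodule.smul_mem _ _ (pPolys_antitone (by omega) (pow_mem_pPolys hp hpR hu k)))
      (subst_mem_pPolys _ hp hpR (mem_pPolys_zero_of_sub_T_mem hp.pos hu) hr)
  obtain ⟨w, hw, hwv⟩ := exists_subst_eq_T hp hpR (by omega) hv'
  refine ⟨subst w _ u, subst_sub_T_mem hp hpR hw hu, ?_⟩
  rw [subst_subst _ hu', AlgHom.comp_apply, hwv]
termination_by n - k

variable (p n R) in
/-- `Q(R)`, see `setOf_mk_f₁_f₂_eq_Pairs`. -/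
def Pairs : Set (D p n R × D p n R) :=
  {x | x.1 - eps p n R ∈ pPolys p n R 0 ∧ x.2 - T p n R ∈ pPolys p n R 1}

namespace Pairs

instance : One (Pairs p n R) := ⟨⟨(eps p n R, T p n R), by simp [Pairs]⟩⟩

@[simp]
theorem coe_one : ((1 : Pairs p n R) : D p n R × D p n R) = (eps p n R, T p n R) := rfl

variable (hp : p.Prime) (hpR : (p : R) = 0)

theorem mul_mem (x y : Pairs p n R) :
    (x.1.1 - eps p n R + subst x.1.2 (pow_eq_zero_of_sub_T_mem hp hpR x.2.2) y.1.1,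
      subst x.1.2 (pow_eq_zero_of_sub_T_mem hp hpR x.2.2) y.1.2) ∈ Pairs p n R := by
  refine ⟨?_, subst_sub_T_mem hp hpR x.2.2 y.2.2⟩
  dsimp only
  convert add_mem x.2.1 (subst_mem_pPolys (pow_eq_zero_of_sub_T_mem hp hpR x.2.2) hp hpR
    (mem_pPolys_zero_of_sub_T_mem hp.pos x.2.2) y.2.1) using 1
  rw [map_sub, subst_eps]
  abel

def mul (x y : Pairs p n R) : Pairs p n R := ⟨_, mul_mem hp hpR x y⟩

theorem mul_assoc (x y z : Pairs p n R) :
    mul hp hpR (mul hp hpR x y) z = mul hp hpR x (mul hp hpR y z) := by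
  ext
  · simp only [mul, subst_subst _ (pow_eq_zero_of_sub_T_mem hp hpR y.2.2), AlgHom.comp_apply,
      map_add, map_sub, subst_eps]
    abel
  · simp only [mul, subst_subst _ (pow_eq_zero_of_sub_T_mem hp hpR y.2.2), AlgHom.comp_apply]

theorem one_mul (x : Pairs p n R) : mul hp hpR 1 x = x := by
  ext <;> simp [mul, subst_T_self]

theorem exists_mul_eq_one (x : Pairs p n R) : ∃ y, mul hp hpR y x = 1 := by
  obtain ⟨w, hw, hwx⟩ := exists_subst_eq_T hp hpR le_rfl x.2.2
  set φ := subst w (pow_eq_zero_of_sub_T_mem hp hpR hw)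
  refine ⟨⟨(eps p n R - φ (x.1.1 - eps p n R), w), ?_, hw⟩, ?_⟩
  · simpa using
      neg_mem (subst_mem_pPolys _ hp hpR (mem_pPolys_zero_of_sub_T_mem hp.pos hw) x.2.1)
  · ext
    · simp [mul, φ]
    · exact hwx

abbrev group : Group (Pairs p n R) :=
  letI : Mul (Pairs p n R) := ⟨mul hp hpR⟩
  letI : Inv (Pairs p n R) := ⟨fun x => (exists_mul_eq_one hp hpR x).choose⟩
  Group.ofLeftAxioms (mul_assoc hp hpR) (one_mul hp hpR)
    fun x => (exists_mul_eq_one hp hpR x).choose_spec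

end Pairs

variable (p n) in
def f₁ (a : ℕ → R) : MvPolynomial (Fin 2) R :=
  X 0 + ∑ i ∈ Finset.range n, C (a i) * X 1 ^ p ^ i

variable (p n) in
def f₂ (b : ℕ → R) : MvPolynomial (Fin 2) R :=
  X 1 + ∑ i ∈ Finset.Ico 1 n, C (b i) * X 1 ^ p ^ i

theorem mk_sum_C_mul_pow (s : Finset ℕ) (e : ℕ → R) (f : MvPolynomial (Fin 2) R) :
    (Ideal.Quotient.mk _ (∑ i ∈ s, C (e i) * f ^ p ^ i) : D p n R) =
      ∑ i ∈ s, e i • Ideal.Quotient.mk _ f ^ p ^ i := by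
  simp only [C_mul', ← Ideal.Quotient.mkₐ_eq_mk R, map_sum, map_smul, map_pow]

theorem mk_f₁ (a : ℕ → R) :
    (Ideal.Quotient.mk _ (f₁ p n a) : D p n R) =
      eps p n R + ∑ i ∈ Finset.range n, a i • T p n R ^ p ^ i := by
  rw [f₁, map_add, mk_sum_C_mul_pow]; rfl

theorem mk_f₂ (b : ℕ → R) :
    (Ideal.Quotient.mk _ (f₂ p n b) : D p n R) =
      T p n R + ∑ i ∈ Finset.Ico 1 n, b i • T p n R ^ p ^ i := by
  rw [f₂, map_add, mk_sum_C_mul_pow]; rfl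

theorem mk_f₁_f₂_mem (a b : ℕ → R) :
    (Ideal.Quotient.mk _ (f₁ p n a), Ideal.Quotient.mk _ (f₂ p n b)) ∈ Pairs p n R := by
  refine ⟨mem_pPolys_iff.2 ⟨a, ?_⟩, mem_pPolys_iff.2 ⟨b, ?_⟩⟩ <;> dsimp only
  · rw [mk_f₁, add_sub_cancel_left, Finset.range_eq_Ico]
  · rw [mk_f₂, add_sub_cancel_left]

theorem setOf_mk_f₁_f₂_eq_Pairs :
    {q | ∃ a b : ℕ → R, q = (Ideal.Quotient.mk _ (f₁ p n a), Ideal.Quotient.mk _ (f₂ p n b))} =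
      Pairs p n R := by
  refine Set.Subset.antisymm (fun _ ⟨a, b, hq⟩ => hq ▸ mk_f₁_f₂_mem a b) ?_
  rintro ⟨u, v⟩ ⟨hu, hv⟩
  obtain ⟨a, ha⟩ := mem_pPolys_iff.1 hu
  obtain ⟨b, hb⟩ := mem_pPolys_iff.1 hv
  refine ⟨a, b, ?_⟩
  rw [mk_f₁, mk_f₂, Finset.range_eq_Ico, ha, hb, add_sub_cancel, add_sub_cancel]

theorem Pairs.coe_mul_of_eq (hp : p.Prime) (hpR : (p : R) = 0) (a b c d : ℕ → R)
    (x y : Pairs p n R)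
    (hx : x.1 = (Ideal.Quotient.mk _ (f₁ p n a), Ideal.Quotient.mk _ (f₂ p n b)))
    (hy : y.1 = (Ideal.Quotient.mk _ (f₁ p n c), Ideal.Quotient.mk _ (f₂ p n d))) :
    (Pairs.mul hp hpR x y).1 =
      (Ideal.Quotient.mk _ (f₁ p n a + ∑ i ∈ Finset.range n, C (c i) * f₂ p n b ^ p ^ i),
        Ideal.Quotient.mk _ (f₂ p n b + ∑ i ∈ Finset.Ico 1 n, C (d i) * f₂ p n b ^ p ^ i)) := by
  revert hx hy
  obtain ⟨⟨x₁, x₂⟩, -⟩ := x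
  obtain ⟨⟨y₁, y₂⟩, -⟩ := y
  rintro ⟨⟩ ⟨⟩
  simp only [Pairs.mul, map_add, mk_sum_C_mul_pow, mk_f₁ c, mk_f₂ d]
  simp only [map_sum, map_smul, map_pow, subst_eps, subst_T, Prod.mk.injEq, and_true]
  abel

end

end TruncDual

theorem stmt_8 (p n : ℕ) (hp : p.Prime)
    (R : Type) [CommRing R] (hpR : (p : R) = 0)
    (I : Ideal (MvPolynomial (Fin 2) R))
    (hI : I = Ideal.span {MvPolynomial.X 0 ^ 2, MvPolynomial.X 1 ^ (p ^ n)})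
    (F1 F2 : (ℕ → R) → MvPolynomial (Fin 2) R)
    (hF1 : ∀ a, F1 a = MvPolynomial.X 0 +
      ∑ i ∈ Finset.range n, MvPolynomial.C (a i) * MvPolynomial.X 1 ^ (p ^ i))
    (hF2 : ∀ b, F2 b = MvPolynomial.X 1 +
      ∑ i ∈ Finset.Ico 1 n, MvPolynomial.C (b i) * MvPolynomial.X 1 ^ (p ^ i))
    (Q : Set ((MvPolynomial (Fin 2) R ⧸ I) × (MvPolynomial (Fin 2) R ⧸ I)))
    (hQ : Q = {q | ∃ a b : ℕ → R,
      q = (Ideal.Quotient.mk I (F1 a), Ideal.Quotient.mk I (F2 b))}) :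
    -- the product is well defined: the result again lies in Q(R)
    (∀ a b c d : ℕ → R,
      ((Ideal.Quotient.mk I (F1 a + ∑ i ∈ Finset.range n,
          MvPolynomial.C (c i) * (F2 b) ^ (p ^ i)),
        Ideal.Quotient.mk I (F2 b + ∑ i ∈ Finset.Ico 1 n,
          MvPolynomial.C (d i) * (F2 b) ^ (p ^ i))) ∈ Q)) ∧
    -- it makes Q(R) a group with identity (ε, X)
    (∃ (mul : Q → Q → Q) (one : Q) (inv : Q → Q),
      (∀ x y z, mul (mul x y) z = mul x (mul y z)) ∧
      (∀ x, mul one x = x) ∧ (∀ x, mul x one = x) ∧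
      (∀ x, mul (inv x) x = one) ∧
      one.1 = (Ideal.Quotient.mk I (MvPolynomial.X 0), Ideal.Quotient.mk I (MvPolynomial.X 1)) ∧
      (∀ (a b c d : ℕ → R) (x y : Q),
        x.1 = (Ideal.Quotient.mk I (F1 a), Ideal.Quotient.mk I (F2 b)) →
        y.1 = (Ideal.Quotient.mk I (F1 c), Ideal.Quotient.mk I (F2 d)) →
        (mul x y).1 =
          (Ideal.Quotient.mk I (F1 a + ∑ i ∈ Finset.range n,
              MvPolynomial.C (c i) * (F2 b) ^ (p ^ i)),
           Ideal.Quotient.mk I (F2 b + ∑ i ∈ Finset.Ico 1 n,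
              MvPolynomial.C (d i) * (F2 b) ^ (p ^ i))))) := by
  subst hI
  obtain rfl : F1 = TruncDual.f₁ p n := funext hF1
  obtain rfl : F2 = TruncDual.f₂ p n := funext hF2
  obtain rfl : Q = TruncDual.Pairs p n R := hQ.trans TruncDual.setOf_mk_f₁_f₂_eq_Pairs
  let _ : Group (TruncDual.Pairs p n R) := TruncDual.Pairs.group hp hpR
  have hmul := TruncDual.Pairs.coe_mul_of_eq (n := n) hp hpR
  refine ⟨fun a b c d => ?_, (· * ·), 1, (·⁻¹), mul_assoc, one_mul, mul_one, inv_mul_cancel,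
    rfl, hmul⟩
  rw [← hmul a b c d ⟨_, TruncDual.mk_f₁_f₂_mem a b⟩ ⟨_, TruncDual.mk_f₁_f₂_mem c d⟩ rfl rfl]
  exact Subtype.prop _
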